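/- In the friendship graph Fr_{2m+1} with m ≥ 2, for any signed Roman dominating function f = (V₋₁, V₁, V₂), the set V₋₁ of vertices labeled −1 has cardinality at most m. -/

import Mathlib

open Finset SimpleGraph
open scoped Classical

/-- The sum of `f` over the closed neighborhood of `v` in `G`. -/
noncomputable def closedNbrSum {V : Type*} [Fintype V] (G : SimpleGraph V)
    (f : V → ℤ) (v : V) : ℤ :=
  ∑ u ∈ Finset.univ.filter (fun u => u = v ∨ G.Adj v u), f u

/-- `f` is a signed Roman dominating function on `G`. -/
def IsSRDF {V : Type*} [Fintype V] (G : SimpleGraph V) (f : V → ℤ) : Prop :=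
  (∀ v, f v = -1 ∨ f v = 1 ∨ f v = 2) ∧
  (∀ v, 1 ≤ closedNbrSum G f v) ∧
  (∀ v, f v = -1 → ∃ u, G.Adj v u ∧ f u = 2)

/-- The signed Roman domination number of `G`. -/
noncomputable def gammaSR {V : Type*} [Fintype V] (G : SimpleGraph V) : ℤ :=
  sInf {w : ℤ | ∃ f, IsSRDF G f ∧ w = ∑ v, f v}

/-- The join of two graphs. -/
def graphJoin {V W : Type*} (G : SimpleGraph V) (H : SimpleGraph W) :
    SimpleGraph (V ⊕ W) where
  Adj x y :=
    match x, y with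
    | .inl a, .inl b => G.Adj a b
    | .inr a, .inr b => H.Adj a b
    | _, _ => True
  symm := ⟨by
    rintro (a | a) (b | b) h <;> simp_all <;> exact h.symm⟩
  loopless := ⟨by
    rintro (a | a) h <;> simp_all⟩


/-- The disjoint union of `m` copies of `K₂`. -/
def mK2 (m : ℕ) : SimpleGraph (Fin m × Fin 2) where
  Adj x y := x.1 = y.1 ∧ x.2 ≠ y.2
  symm := ⟨fun x y h => ⟨h.1.symm, h.2.symm⟩⟩
  loopless := ⟨fun x h => h.2 rfl⟩

/-- The friendship graph with `m` triangles sharing a common vertex. -/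
def friendshipGraph (m : ℕ) : SimpleGraph (Fin 1 ⊕ (Fin m × Fin 2)) :=
  graphJoin (⊥ : SimpleGraph (Fin 1)) (mK2 m)

/-!
Each blade `yᵢzᵢ` spans a triangle with the centre `x`, and the closed neighbourhood of `yᵢ` is
that triangle, so `f x + f yᵢ + f zᵢ ≥ 1` while all labels are at most `2`. If `f x = -1`, this
forces `f yᵢ + f zᵢ ≥ 2`, so no blade vertex is labelled `-1` and `V₋₁ = {x}`; the centre then
needs a neighbour labelled `2`, so `m ≥ 1`. Otherwise `V₋₁` injects into the `m` blades, since
a blade labelled `-1, -1` would force `f x ≥ 3`.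
-/

section Fibers

variable {α β : Type*} [Fintype α] [Fintype β]

theorem Finset.card_filter_le_card_of_fiber_subsingleton (p : α × β → Prop) [DecidablePred p]
    (hp : ∀ i j j', p (i, j) → p (i, j') → j = j') :
    #(univ.filter p) ≤ Fintype.card α := by
  refine card_le_card_of_injOn Prod.fst (fun _ _ => mem_univ _) ?_
  rintro ⟨i, j⟩ hij ⟨i', j'⟩ hij' (rfl : i = i')
  simp only [coe_filter, mem_univ, true_and, Set.mem_ofPred_eq] at hij hij'
  rw [hp i j j' hij hij']

end Fibers

namespace friendshipGraph

variable {m : ℕ}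

@[simp]
theorem adj_inr_inl (p : Fin m × Fin 2) (a : Fin 1) : (friendshipGraph m).Adj (.inr p) (.inl a) :=
  trivial

@[simp]
theorem adj_inr_inr (p q : Fin m × Fin 2) :
    (friendshipGraph m).Adj (.inr p) (.inr q) ↔ p.1 = q.1 ∧ p.2 ≠ q.2 :=
  Iff.rfl

theorem closedNbrSum_inr (f : Fin 1 ⊕ (Fin m × Fin 2) → ℤ) (i : Fin m) (j : Fin 2) :
    closedNbrSum (friendshipGraph m) f (.inr (i, j)) =
      f (.inl 0) + f (.inr (i, 0)) + f (.inr (i, 1)) := by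
  have hnbr : univ.filter (fun u => u = .inr (i, j) ∨ (friendshipGraph m).Adj (.inr (i, j)) u) =
      {.inl 0, .inr (i, 0), .inr (i, 1)} := by
    ext u
    rcases u with a | ⟨i', j'⟩
    · simp [Fin.fin_one_eq_zero a]
    · simp only [mem_filter, mem_univ, true_and, mem_insert, mem_singleton, Sum.inr.injEq,
        Prod.ext_iff, adj_inr_inr, reduceCtorEq, false_or]
      fin_cases j <;> fin_cases j' <;> simp [eq_comm]
  rw [closedNbrSum, filter_congr_decidable, hnbr, sum_insert (by simp),
    sum_insert (by simp [Prod.ext_iff]), sum_singleton, add_assoc]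

end friendshipGraph

namespace IsSRDF

variable {V : Type*} [Fintype V] {G : SimpleGraph V} {f : V → ℤ}

theorem le_two (hf : IsSRDF G f) (v : V) : f v ≤ 2 := by
  rcases hf.1 v with h | h | h <;> omega

variable {m : ℕ} {f : Fin 1 ⊕ (Fin m × Fin 2) → ℤ}

theorem one_le_triangle_sum (hf : IsSRDF (friendshipGraph m) f) (i : Fin m) :
    1 ≤ f (.inl 0) + f (.inr (i, 0)) + f (.inr (i, 1)) :=
  friendshipGraph.closedNbrSum_inr f i 0 ▸ hf.2.1 (.inr (i, 0))

theorem inr_ne_neg_one_of_inl_eq (hf : IsSRDF (friendshipGraph m) f)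
    (hx : f (.inl 0) = -1) (p : Fin m × Fin 2) : f (.inr p) ≠ -1 := by
  obtain ⟨i, j⟩ := p
  have htri := hf.one_le_triangle_sum i
  rw [hx] at htri
  have h₀ := hf.le_two (.inr (i, 0))
  have h₁ := hf.le_two (.inr (i, 1))
  fin_cases j
  · dsimp; omega
  · dsimp; omega

theorem not_both_inr_neg_one (hf : IsSRDF (friendshipGraph m) f) (i : Fin m) :
    ¬(f (.inr (i, 0)) = -1 ∧ f (.inr (i, 1)) = -1) := by
  rintro ⟨h₀, h₁⟩
  have := hf.one_le_triangle_sum i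
  have := hf.le_two (.inl 0)
  omega

end IsSRDF

theorem stmt17_general (m : ℕ) (f : Fin 1 ⊕ (Fin m × Fin 2) → ℤ)
    (hf : IsSRDF (friendshipGraph m) f) :
    (Finset.univ.filter (fun v => f v = -1)).card ≤ m := by
  by_cases hx : f (.inl 0) = -1
  · have hsub : univ.filter (fun v => f v = -1) ⊆ {.inl 0} := by
      rintro (a | p) hv
      · simp [Fin.fin_one_eq_zero a]
      · exact absurd (mem_filter.1 hv).2 (hf.inr_ne_neg_one_of_inl_eq hx p)
    obtain ⟨u, hxu, -⟩ := hf.2.2 _ hx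
    have hm : 0 < m := by
      rcases u with a | ⟨i, -⟩
      · simp [Fin.fin_one_eq_zero a] at hxu
      · exact i.pos
    exact ((card_le_card hsub).trans_eq (card_singleton _)).trans hm
  · have hsub : univ.filter (fun v => f v = -1) ⊆
        (univ.filter (fun p => f (.inr p) = -1)).map .inr := by
      rintro (a | p) hv
      · simp_all [Fin.fin_one_eq_zero a]
      · simpa using hv
    have hblade : #(univ.filter (fun p => f (.inr p) = -1)) ≤ m := by
      simpa using card_filter_le_card_of_fiber_subsingleton (fun p => f (.inr p) = -1)
        fun i j j' hj hj' => by
          have := hf.not_both_inr_neg_one i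
          fin_cases j <;> fin_cases j' <;> simp_all
    exact (card_le_card hsub).trans (by simpa using hblade)

theorem stmt17 (m : ℕ) (hm : 2 ≤ m) (f : Fin 1 ⊕ (Fin m × Fin 2) → ℤ)
    (hf : IsSRDF (friendshipGraph m) f) :
    (Finset.univ.filter (fun v => f v = -1)).card ≤ m :=
  stmt17_general m f hf
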